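/- If B is a finite set of integers ≥ 2 and r, r' ∈ ℤ with r | r', then d(M_B ∪ (M_B + r)) ≥ d(M_B ∪ (M_B + r')), where M_B = ⋃_{b∈B} bℤ and d denotes natural density. -/

import Mathlib

open Filter

/-- `M_B = ⋃_{b ∈ B} bℤ` as a subset of `ℤ`. -/
def MB (B : Finset ℕ) : Set ℤ := {n : ℤ | ∃ b ∈ B, (b : ℤ) ∣ n}

open scoped Classical in
/-- Counting function for the two-sided density of a subset of `ℤ`. -/
noncomputable def cnt (E : Set ℤ) (n : ℕ) : ℝ :=
  (((Finset.Icc (-(n : ℤ)) n).filter (fun i => i ∈ E)).card : ℝ) / (2 * n + 1)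

/-! Both sets are periodic modulo `N = lcm B`, so their densities are `#U(t) / N`, where
`U(t) = M ∪ (M + t)` and `M` is the set of multiples of `B` in `ZMod N`. By induction on the
prime factors of the multiplier it suffices to show `#U(p * t) ≤ #U(t)` for a prime `p`
(Rogers' argument). Split `ZMod N ≃ ZMod (p ^ e) × ZMod M` with `p ∤ M`. Multiplication by `p`
permutes the second factor, and over each point of it the fibre of `U` has the form `I ∪ (u + J)`
in `ZMod (p ^ e)`, where `I` and `J` are ideals or empty because divisibility in `ZMod (p ^ e)`
is total. Such a set has `#(I ∪ J)` elements if `u ∈ I + J` and `#I + #J` otherwise, and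
`u ∈ I + J` implies `p * u ∈ I + J`. -/

open Finset Topology
open scoped Classical

section AddCommGroup

variable {G : Type*} [AddCommGroup G]

lemma add_mem_iff_of_sub_mem {A : Set G} (hA : ∀ x ∈ A, ∀ y ∈ A, x - y ∈ A) {a : G} (ha : a ∈ A)
    (w : G) : a + w ∈ A ↔ w ∈ A := by
  have h0 : (0 : G) ∈ A := by simpa using hA a ha a ha
  refine ⟨fun h => by simpa using hA _ h a ha, fun h => by simpa using hA a ha _ (hA 0 h0 w h)⟩

variable [Fintype G]

lemma card_filter_sub_mem (C : Set G) (t : G) : #{y | y - t ∈ C} = #{y | y ∈ C} :=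
  (card_equiv (Equiv.addRight t) (by simp)).symm

/-- A set closed under subtraction is empty or a subgroup, so once `A` meets `C + t`,
translating by a common point identifies `A ∪ (C + t)` with `A ∪ C`. -/
lemma card_filter_mem_or_sub_mem_of_mem {A C : Set G} (hA : ∀ x ∈ A, ∀ y ∈ A, x - y ∈ A)
    (hC : ∀ x ∈ C, ∀ y ∈ C, x - y ∈ C) {a t : G} (ha : a ∈ A) (hat : a - t ∈ C) :
    #{y | y ∈ A ∨ y - t ∈ C} = #{y | y ∈ A ∨ y ∈ C} := by
  refine (card_equiv (Equiv.addLeft a) fun w => ?_).symm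
  simp only [mem_filter, mem_univ, true_and, Equiv.coe_addLeft, add_sub_right_comm a w t,
    add_mem_iff_of_sub_mem hA ha, add_mem_iff_of_sub_mem hC hat]

lemma card_filter_mem_or_sub_mem_le {A C : Set G} (hA : ∀ x ∈ A, ∀ y ∈ A, x - y ∈ A)
    (hC : ∀ x ∈ C, ∀ y ∈ C, x - y ∈ C) {t t' : G}
    (h : (∃ a ∈ A, a - t ∈ C) → ∃ a ∈ A, a - t' ∈ C) :
    #{y | y ∈ A ∨ y - t' ∈ C} ≤ #{y | y ∈ A ∨ y - t ∈ C} := by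
  by_cases ht : ∃ a ∈ A, a - t ∈ C
  · obtain ⟨a, ha, hat⟩ := ht
    obtain ⟨a', ha', hat'⟩ := h ⟨a, ha, hat⟩
    rw [card_filter_mem_or_sub_mem_of_mem hA hC ha hat,
      card_filter_mem_or_sub_mem_of_mem hA hC ha' hat']
  · have hdisj : Disjoint ({y | y ∈ A} : Finset G) ({y | y - t ∈ C} : Finset G) :=
      disjoint_filter.mpr fun y _ hy hyt => ht ⟨y, hy, hyt⟩
    calc #{y | y ∈ A ∨ y - t' ∈ C}
        ≤ #{y | y ∈ A} + #{y | y - t' ∈ C} := by rw [filter_or]; exact card_union_le _ _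
      _ = #{y | y ∈ A} + #{y | y - t ∈ C} := by rw [card_filter_sub_mem, card_filter_sub_mem]
      _ = #{y | y ∈ A ∨ y - t ∈ C} := by rw [filter_or, card_union_of_disjoint hdisj]

end AddCommGroup

section Multiples

variable {R S : Type*} [CommRing R] [CommRing S]

def multiples (D : Set R) : Set R := {x | ∃ d ∈ D, d ∣ x}

lemma mul_mem_multiples {D : Set R} {x : R} (hx : x ∈ multiples D) (a : R) :
    a * x ∈ multiples D :=
  let ⟨d, hd, hdx⟩ := hx
  ⟨d, hd, hdx.mul_left a⟩

lemma sub_mem_multiples [PreValuationRing R] {D : Set R} {x y : R} (hx : x ∈ multiples D)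
    (hy : y ∈ multiples D) : x - y ∈ multiples D := by
  obtain ⟨d, hd, hdx⟩ := hx
  obtain ⟨e, he, hey⟩ := hy
  rcases ValuationRing.dvd_total d e with hde | hed
  · exact ⟨d, hd, dvd_sub hdx (hde.trans hey)⟩
  · exact ⟨e, he, dvd_sub (hed.trans hdx) hey⟩

lemma card_filter_mem_multiples_or_sub_mul_le [PreValuationRing R] [Fintype R] (D E : Set R)
    (a t : R) :
    #{y | y ∈ multiples D ∨ y - a * t ∈ multiples E}
      ≤ #{y | y ∈ multiples D ∨ y - t ∈ multiples E} :=
  card_filter_mem_or_sub_mem_le (fun _ hx _ hy => sub_mem_multiples hx hy)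
    (fun _ hx _ hy => sub_mem_multiples hx hy) fun ⟨x, hx, hxt⟩ =>
      ⟨a * x, mul_mem_multiples hx a, by rw [← mul_sub]; exact mul_mem_multiples hxt a⟩

variable [Fintype R] [Fintype S]

/-- The residues of `M_D ∪ (M_D + t)`, where `M_D = multiples D`. -/
noncomputable def shiftUnion (D : Set R) (t : R) : Finset R :=
  {x | x ∈ multiples D ∨ x - t ∈ multiples D}

lemma mem_shiftUnion {D : Set R} {t x : R} :
    x ∈ shiftUnion D t ↔ x ∈ multiples D ∨ x - t ∈ multiples D := by
  simp [shiftUnion]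

lemma card_shiftUnion_image (e : R ≃+* S) (D : Set R) (t : R) :
    #(shiftUnion (e '' D) (e t)) = #(shiftUnion D t) :=
  (card_equiv e.toEquiv fun x => by
    simp [mem_shiftUnion, multiples, map_dvd_iff, ← map_sub]).symm

lemma card_shiftUnion_prod (D : Set (R × S)) (t : R × S) :
    #(shiftUnion D t) = ∑ z, #{y | y ∈ multiples (Prod.fst '' {d ∈ D | d.2 ∣ z}) ∨
      y - t.1 ∈ multiples (Prod.fst '' {d ∈ D | d.2 ∣ z - t.2})} := by
  rw [shiftUnion, card_filter, Fintype.sum_prod_type_right]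
  refine sum_congr rfl fun z _ => ?_
  rw [card_filter]
  refine sum_congr rfl fun y _ => ?_
  simp only [multiples, Set.mem_ofPred_eq, Set.exists_mem_image, prod_dvd_iff,
    Prod.fst_sub, Prod.snd_sub, and_assoc, and_comm (a := _ ∣ y), and_comm (a := _ ∣ y - t.1)]

theorem card_shiftUnion_mul_le_of_isUnit_snd [PreValuationRing R] (D : Set (R × S))
    {a : R × S} (ha : IsUnit a.2) (t : R × S) :
    #(shiftUnion D (a * t)) ≤ #(shiftUnion D t) := by
  rw [card_shiftUnion_prod, card_shiftUnion_prod, ← Equiv.sum_comp (Units.mulLeft ha.unit)]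
  refine sum_le_sum fun z _ => ?_
  have hz : Prod.fst '' {d ∈ D | d.2 ∣ a.2 * z} = Prod.fst '' {d ∈ D | d.2 ∣ z} := by
    simp_rw [ha.dvd_mul_left]
  have hzt : Prod.fst '' {d ∈ D | d.2 ∣ a.2 * z - (a * t).2} =
      Prod.fst '' {d ∈ D | d.2 ∣ z - t.2} := by
    simp_rw [Prod.snd_mul, ← mul_sub, ha.dvd_mul_left]
  rw [Units.mulLeft_apply, IsUnit.unit_spec, hz, hzt, Prod.fst_mul]
  exact card_filter_mem_multiples_or_sub_mul_le _ _ a.1 t.1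

end Multiples

instance {p : ℕ} [Fact p.Prime] (e : ℕ) : PreValuationRing (ZMod (p ^ e)) :=
  (ZMod.ringHom_surjective (PadicInt.toZModPow (p := p) e)).preValuationRing
    (PadicInt.toZModPow e).toMonoidHom.toMulHom

theorem card_shiftUnion_prime_mul_le {N : ℕ} [NeZero N] {p : ℕ} (hp : p.Prime)
    (D : Set (ZMod N)) (t : ZMod N) : #(shiftUnion D (p * t)) ≤ #(shiftUnion D t) := by
  obtain ⟨e, M, hpM, rfl⟩ := Nat.exists_eq_pow_mul_and_not_dvd (NeZero.ne N) p hp.ne_one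
  have := Fact.mk hp
  have : NeZero (p ^ e) := ⟨pow_ne_zero e hp.ne_zero⟩
  have : NeZero M := ⟨right_ne_zero_of_mul (NeZero.ne (p ^ e * M))⟩
  have hcop : p.Coprime M := hp.coprime_iff_not_dvd.mpr hpM
  let χ := ZMod.chineseRemainder (hcop.pow_left e)
  have hunit : IsUnit (χ p).2 := by
    simpa [χ] using (ZMod.isUnit_iff_coprime p M).mpr hcop
  calc #(shiftUnion D (p * t))
      = #(shiftUnion (χ '' D) (χ p * χ t)) := by rw [← map_mul, card_shiftUnion_image]
    _ ≤ #(shiftUnion (χ '' D) (χ t)) := card_shiftUnion_mul_le_of_isUnit_snd _ hunit _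
    _ = #(shiftUnion D t) := card_shiftUnion_image _ _ _

theorem card_shiftUnion_le_of_dvd {N : ℕ} [NeZero N] (D : Set (ZMod N)) {t t' : ZMod N}
    (h : t ∣ t') : #(shiftUnion D t') ≤ #(shiftUnion D t) := by
  obtain ⟨c, rfl⟩ := h
  rw [← ZMod.natCast_zmod_val c, mul_comm]
  induction c.val using induction_on_primes with
  | zero =>
    refine card_le_card fun x hx => ?_
    simp only [mem_shiftUnion, Nat.cast_zero, zero_mul, sub_zero, or_self] at hx ⊢
    exact Or.inl hx
  | one => simp
  | prime_mul p a hp ih =>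
    rw [Nat.cast_mul, mul_assoc]
    exact (card_shiftUnion_prime_mul_le hp D _).trans ih

lemma abs_card_filter_modEq_Icc_sub_le {N : ℕ} (hN : 0 < N) (v : ℤ) (k : ℕ) :
    |(#{n ∈ Icc (-k : ℤ) k | n ≡ v [ZMOD N]} : ℝ) - (2 * k + 1) / N| ≤ 1 := by
  have hIcc : Icc (-k : ℤ) k = Ioc (-(k : ℤ) - 1) k := by ext; simp
  have hcard := Int.Ioc_filter_modEq_card (-(k : ℤ) - 1) k (r := N) (by exact_mod_cast hN) v
  set x : ℚ := (((k : ℤ) : ℚ) - v) / ((N : ℤ) : ℚ)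
  set y : ℚ := (((-(k : ℤ) - 1 : ℤ) : ℚ) - v) / ((N : ℤ) : ℚ)
  have hxy : x - y = (2 * k + 1) / N := by
    simp only [x, y]
    push_cast
    ring
  have hyx : ⌊y⌋ ≤ ⌊x⌋ :=
    Int.floor_mono (by linarith [show (0 : ℚ) ≤ (2 * k + 1) / N by positivity])
  rw [max_eq_left (sub_nonneg.mpr hyx)] at hcard
  have hQ : |(#{n ∈ Icc (-k : ℤ) k | n ≡ v [ZMOD N]} : ℚ) - (2 * k + 1) / N| ≤ 1 := by
    rw [hIcc, ← hxy, abs_le]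
    have hcardQ := congrArg (Int.cast : ℤ → ℚ) hcard
    push_cast at hcardQ
    rw [hcardQ]
    constructor <;> linarith [Int.floor_le x, Int.lt_floor_add_one x, Int.floor_le y,
      Int.lt_floor_add_one y]
  simpa using (Rat.cast_le (K := ℝ)).mpr hQ

lemma tendsto_cnt_modEq {N : ℕ} (hN : 0 < N) (v : ℤ) :
    Tendsto (cnt {n | n ≡ v [ZMOD N]}) atTop (𝓝 (1 / N)) := by
  rw [tendsto_iff_dist_tendsto_zero]
  refine squeeze_zero (fun _ => dist_nonneg) (fun k => ?_)
    tendsto_one_div_add_atTop_nhds_zero_nat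
  have hk : (0 : ℝ) < 2 * k + 1 := by positivity
  have hcnt : cnt {n | n ≡ v [ZMOD N]} k =
      #{n ∈ Icc (-k : ℤ) k | n ≡ v [ZMOD N]} / (2 * k + 1) := by
    rw [cnt]
    congr
  calc dist (cnt {n | n ≡ v [ZMOD N]} k) (1 / N)
      = |(#{n ∈ Icc (-k : ℤ) k | n ≡ v [ZMOD N]} : ℝ) - (2 * k + 1) / N| / (2 * k + 1) := by
        rw [hcnt, Real.dist_eq, ← abs_of_pos hk, ← abs_div, abs_of_pos hk]
        congr 1
        field_simp
    _ ≤ 1 / (2 * k + 1) := by gcongr; exact abs_card_filter_modEq_Icc_sub_le hN v k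
    _ ≤ 1 / (k + 1) := by gcongr; linarith

lemma tendsto_cnt_preimage_intCast {N : ℕ} [NeZero N] (s : Finset (ZMod N)) :
    Tendsto (cnt {n : ℤ | (n : ZMod N) ∈ s}) atTop (𝓝 (#s / N)) := by
  have hsplit : cnt {n : ℤ | (n : ZMod N) ∈ s} =
      fun k => ∑ c ∈ s, cnt {n | n ≡ c.val [ZMOD N]} k := by
    ext k
    simp only [cnt, ← sum_div]
    congr 1
    rw [card_eq_sum_card_fiberwise (f := ((↑) : ℤ → ZMod N)) (t := s) fun n hn => by simp_all]
    push_cast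
    refine sum_congr rfl fun c hc => ?_
    congr 2
    ext n
    simp only [mem_filter, Set.mem_ofPred_eq, ← ZMod.intCast_eq_intCast_iff, Int.cast_natCast,
      ZMod.natCast_zmod_val]
    grind
  rw [hsplit]
  simpa [div_eq_mul_one_div (#s : ℝ)] using
    tendsto_finsetSum s fun c _ => tendsto_cnt_modEq (Nat.pos_of_neZero N) c.val

lemma ZMod.natCast_dvd_intCast_iff {b N : ℕ} (hb : b ∣ N) (n : ℤ) :
    (b : ZMod N) ∣ n ↔ (b : ℤ) ∣ n := by
  refine ⟨fun ⟨c, hc⟩ => ?_, fun h => by exact_mod_cast Int.cast_dvd_cast _ _ h⟩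
  have h := congrArg (ZMod.castHom hb (ZMod b)) hc
  rw [map_intCast, map_mul, map_natCast, ZMod.natCast_self, zero_mul] at h
  exact (ZMod.intCast_zmod_eq_zero_iff_dvd n b).mp h

lemma MB_union_shift_eq {B : Finset ℕ} {N : ℕ} [NeZero N] (hB : ∀ b ∈ B, b ∣ N) (t : ℤ) :
    MB B ∪ {n | n - t ∈ MB B} =
      {n : ℤ | (n : ZMod N) ∈ shiftUnion ((↑) '' (B : Set ℕ)) (t : ZMod N)} := by
  have hMB : ∀ n : ℤ, n ∈ MB B ↔ (n : ZMod N) ∈ multiples ((↑) '' (B : Set ℕ)) := fun n => by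
    simp only [MB, multiples, Set.mem_ofPred_eq, Set.exists_mem_image, mem_coe]
    exact exists_congr fun b =>
      and_congr_right fun hb => (ZMod.natCast_dvd_intCast_iff (hB b hb) n).symm
  ext n
  simp only [Set.mem_union, Set.mem_ofPred_eq, mem_shiftUnion, hMB, Int.cast_sub]

lemma tendsto_cnt_MB_union_shift {B : Finset ℕ} {N : ℕ} [NeZero N] (hB : ∀ b ∈ B, b ∣ N)
    (t : ℤ) : Tendsto (cnt (MB B ∪ {n | n - t ∈ MB B})) atTop
      (𝓝 (#(shiftUnion ((↑) '' (B : Set ℕ)) (t : ZMod N)) / N)) := by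
  rw [MB_union_shift_eq hB]
  exact tendsto_cnt_preimage_intCast _

theorem density_union_shift_antitone_of_dvd (B : Finset ℕ) (hB : ∀ b ∈ B, 2 ≤ b)
    (r r' : ℤ) (hdvd : r ∣ r') :
    ∃ L L' : ℝ,
      Filter.Tendsto (cnt (MB B ∪ {n : ℤ | n - r ∈ MB B})) Filter.atTop (nhds L) ∧
      Filter.Tendsto (cnt (MB B ∪ {n : ℤ | n - r' ∈ MB B})) Filter.atTop (nhds L') ∧
      L' ≤ L := by
  have : NeZero (B.lcm id) := ⟨fun h => by
    obtain ⟨b, hb, hb0 : b = 0⟩ := Finset.lcm_eq_zero_iff.mp h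
    linarith [hB b hb]⟩
  have hdvdN : ∀ b ∈ B, b ∣ B.lcm id := fun b hb => dvd_lcm (f := id) hb
  refine ⟨_, _, tendsto_cnt_MB_union_shift hdvdN r, tendsto_cnt_MB_union_shift hdvdN r',
    div_le_div_of_nonneg_right ?_ (Nat.cast_nonneg _)⟩
  exact_mod_cast card_shiftUnion_le_of_dvd _ (Int.cast_dvd_cast r r' hdvd)
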